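/- arXiv:1204.6648 — 4 statements merged into one kernel-verified Lean document; each statement's English description precedes it below -/
import Mathlib

section
/- Let $\sigma>0$ and $\zeta\in(0,1]$. Suppose $(a_{kx})_{k\in\mathbb{N},\,x\in\mathbb{Z}^d}$ are nonnegative reals satisfying $\sum_{x\in\mathbb{Z}^d} a_{kx} = 1$ for every $k$, and $\sum_{k} a_{kx} \le 1$ for every $x\in\mathbb{Z}^d$. Define $A_k := \sum_{x\in\mathbb{Z}^d} e^{\sigma|x|^\zeta} a_{kx} \in [0,\infty]$. Then there is a constant $C = C(\sigma,\zeta,d) > 0$ such that for every integer $L \ge 2$, the number of indices $k$ with $A_k \le L$ is at most $C(\log L)^{d/\zeta}$. -/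
open scoped ENNReal

/-- Counting lemma: the number of indices `k` whose subexponential moment
`A_k = ∑_x e^{σ|x|^ζ} a_{kx}` is at most `L` is bounded by `C (log L)^{d/ζ}`. -/
theorem stmt_0 (d : ℕ) (hd : 0 < d) (σ ζ : ℝ) (hσ : 0 < σ) (hζ0 : 0 < ζ) (hζ1 : ζ ≤ 1)
    (a : ℕ → (Fin d → ℤ) → ℝ)
    (ha : ∀ k x, 0 ≤ a k x)
    (hrow : ∀ k, HasSum (fun x => a k x) 1)
    (hcolS : ∀ x, Summable (fun k => a k x))
    (hcol : ∀ x, ∑' k, a k x ≤ 1) :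
    ∃ C > 0, ∀ L : ℕ, 2 ≤ L →
      {k : ℕ | (∑' x : Fin d → ℤ,
          ENNReal.ofReal (Real.exp (σ * ‖x‖ ^ ζ) * a k x)) ≤ (L : ℝ≥0∞)}.Finite ∧
      (({k : ℕ | (∑' x : Fin d → ℤ,
          ENNReal.ofReal (Real.exp (σ * ‖x‖ ^ ζ) * a k x)) ≤ (L : ℝ≥0∞)}.ncard : ℝ)
        ≤ C * (Real.log L) ^ ((d : ℝ) / ζ)) := by
  have hlog2 : (0:ℝ) < Real.log 2 := Real.log_pos (by norm_num)
  set c1 : ℝ := 2 * (2/σ) ^ ((1:ℝ)/ζ) + 3 / (Real.log 2) ^ ((1:ℝ)/ζ) with hc1def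
  have hc1 : 0 < c1 := by positivity
  refine ⟨2 * c1 ^ d, by positivity, ?_⟩
  intro L hL
  have hLpos : (0:ℝ) < L := by positivity
  have hlogL : Real.log 2 ≤ Real.log L := Real.log_le_log (by norm_num) (by exact_mod_cast hL)
  have hlogLpos : (0:ℝ) < Real.log L := lt_of_lt_of_le hlog2 hlogL
  have h2L : (0:ℝ) < Real.log (2 * L) := Real.log_pos (by
    have : (2:ℝ) ≤ L := by exact_mod_cast hL
    linarith)
  set R : ℝ := (Real.log (2 * L) / σ) ^ ((1:ℝ)/ζ) with hRdef
  have hR0 : 0 ≤ R := Real.rpow_nonneg (by positivity) _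
  set N : ℕ := ⌈R⌉₊ with hNdef
  set B : Finset (Fin d → ℤ) := Finset.Icc (fun _ => -(N:ℤ)) (fun _ => (N:ℤ)) with hBdef
  set S : Set ℕ := {k : ℕ | (∑' x : Fin d → ℤ,
      ENNReal.ofReal (Real.exp (σ * ‖x‖ ^ ζ) * a k x)) ≤ (L : ℝ≥0∞)} with hSdef
  -- exponential lower bound off the box
  have hexp : ∀ x : Fin d → ℤ, x ∉ B → (2 * L : ℝ) ≤ Real.exp (σ * ‖x‖ ^ ζ) := by
    intro x hx
    have hRx : R ≤ ‖x‖ := by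
      obtain ⟨i, hi⟩ : ∃ i, (N:ℤ) < |x i| := by
        by_contra hcon; push_neg at hcon
        apply hx
        rw [hBdef, Finset.mem_Icc, Pi.le_def, Pi.le_def]
        exact ⟨fun i => (abs_le.mp (hcon i)).1, fun i => (abs_le.mp (hcon i)).2⟩
      have hNx : (N:ℝ) < ‖x i‖ := by
        rw [Int.norm_eq_abs]; exact_mod_cast hi
      calc R ≤ (N:ℝ) := Nat.le_ceil R
        _ ≤ ‖x i‖ := hNx.le
        _ ≤ ‖x‖ := norm_le_pi_norm x i
    have hRζ : R ^ ζ = Real.log (2 * L) / σ := by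
      rw [hRdef, ← Real.rpow_mul (by positivity), one_div_mul_cancel hζ0.ne', Real.rpow_one]
    have : Real.log (2 * L) ≤ σ * ‖x‖ ^ ζ := by
      have h1 : R ^ ζ ≤ ‖x‖ ^ ζ := Real.rpow_le_rpow hR0 hRx hζ0.le
      rw [hRζ] at h1
      calc Real.log (2 * L) = σ * (Real.log (2 * L) / σ) := by field_simp
        _ ≤ σ * ‖x‖ ^ ζ := by nlinarith
    calc (2 * L : ℝ) = Real.exp (Real.log (2 * L)) := (Real.exp_log (by positivity)).symm
      _ ≤ Real.exp (σ * ‖x‖ ^ ζ) := Real.exp_le_exp.mpr this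
  -- half-mass claim
  have hhalf : ∀ k ∈ S, (1:ℝ)/2 ≤ ∑ x ∈ B, a k x := by
    intro k hk
    have hsum : Summable (fun x => a k x) := (hrow k).summable
    have hout : ∑' (x : ((B : Set (Fin d → ℤ))ᶜ : Set (Fin d → ℤ))), a k x ≤ 1/2 := by
      set s : ℝ≥0∞ := ∑' (x : ((B : Set (Fin d → ℤ))ᶜ : Set (Fin d → ℤ))), ENNReal.ofReal (a k x) with hs
      have hmul : (2 * L : ℝ≥0∞) * s ≤ (L : ℝ≥0∞) := by
        rw [hs, ← ENNReal.tsum_mul_left]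
        calc ∑' (x : ((B : Set (Fin d → ℤ))ᶜ : Set (Fin d → ℤ))), (2 * L : ℝ≥0∞) * ENNReal.ofReal (a k x)
            ≤ ∑' (x : ((B : Set (Fin d → ℤ))ᶜ : Set (Fin d → ℤ))),
                ENNReal.ofReal (Real.exp (σ * ‖(x:Fin d → ℤ)‖ ^ ζ) * a k x) := by
              apply ENNReal.tsum_le_tsum
              intro x
              rw [ENNReal.ofReal_mul (Real.exp_nonneg _)]
              have h2 : (2 * L : ℝ≥0∞) = ENNReal.ofReal (2 * L) := by
                rw [ENNReal.ofReal_mul (by norm_num)]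
                simp [ENNReal.ofReal_ofNat, ENNReal.ofReal_natCast]
              rw [h2]
              have hxB : (x : Fin d → ℤ) ∉ B := fun h => x.2 (by simpa using h)
              exact mul_le_mul_left (ENNReal.ofReal_le_ofReal (hexp x hxB)) _
          _ ≤ ∑' x : Fin d → ℤ, ENNReal.ofReal (Real.exp (σ * ‖x‖ ^ ζ) * a k x) :=
              ENNReal.tsum_comp_le_tsum_of_injective Subtype.val_injective _
          _ ≤ (L : ℝ≥0∞) := hk
      have hLne : (2 * L : ℝ≥0∞) ≠ 0 := by
        simp; omega
      have hLnt : (2 * L : ℝ≥0∞) ≠ ⊤ := by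
        simp [ENNReal.mul_ne_top]
      have hs12 : s ≤ 1/2 := by
        rw [← ENNReal.mul_le_mul_iff_right hLne hLnt]
        calc (2 * L : ℝ≥0∞) * s ≤ (L : ℝ≥0∞) := hmul
          _ = (2 * L : ℝ≥0∞) * (1/2) := by
              rw [mul_comm (2:ℝ≥0∞), mul_assoc, one_div,
                ENNReal.mul_inv_cancel (by norm_num) (by norm_num), mul_one]
      have heq : s = ENNReal.ofReal (∑' (x : ((B : Set (Fin d → ℤ))ᶜ : Set (Fin d → ℤ))), a k x) := by
        rw [ENNReal.ofReal_tsum_of_nonneg (fun _ => ha k _) (hsum.subtype _)]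
      rw [heq] at hs12
      have h12 : (1/2 : ℝ≥0∞) = ENNReal.ofReal (1/2) := by norm_num [ENNReal.ofReal_div_of_pos]
      rw [h12, ENNReal.ofReal_le_ofReal_iff (by norm_num)] at hs12
      exact hs12
    have htot := Summable.sum_add_tsum_compl (s := B) hsum
    rw [(hrow k).tsum_eq] at htot
    linarith
  -- counting
  have hBcard : B.card = (2 * N + 1) ^ d := by
    rw [hBdef, Pi.card_Icc]
    simp only [Int.card_Icc]
    rw [Finset.prod_const, Finset.card_univ, Fintype.card_fin]
    congr 1
    omega
  have key : ∀ F : Finset ℕ, ↑F ⊆ S → (F.card : ℝ) ≤ 2 * B.card := by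
    intro F hF
    have h1 : (F.card : ℝ) * (1/2) ≤ ∑ k ∈ F, ∑ x ∈ B, a k x := by
      calc (F.card : ℝ) * (1/2) = ∑ _k ∈ F, (1/2 : ℝ) := by rw [Finset.sum_const]; ring
        _ ≤ ∑ k ∈ F, ∑ x ∈ B, a k x :=
          Finset.sum_le_sum fun k hk => hhalf k (hF hk)
    have h2 : ∑ k ∈ F, ∑ x ∈ B, a k x ≤ (B.card : ℝ) := by
      rw [Finset.sum_comm]
      calc ∑ x ∈ B, ∑ k ∈ F, a k x ≤ ∑ _x ∈ B, (1:ℝ) := by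
            apply Finset.sum_le_sum
            intro x _
            exact le_trans (Summable.sum_le_tsum F (fun k _ => ha k x) (hcolS x)) (hcol x)
        _ = (B.card : ℝ) := by simp
    linarith
  have hfin : S.Finite := by
    by_contra hinf
    have hinf' : S.Infinite := hinf
    obtain ⟨F, hFS, hFcard⟩ := hinf'.exists_subset_card_eq (2 * B.card + 1)
    have := key F hFS
    rw [hFcard] at this
    push_cast at this
    linarith
  refine ⟨hfin, ?_⟩
  have hScard : (S.ncard : ℝ) ≤ 2 * B.card := by
    have := key hfin.toFinset (by simp)
    rw [Set.ncard_eq_toFinset_card S hfin]; exact this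
  -- arithmetic
  have hN : (N : ℝ) ≤ R + 1 := (Nat.ceil_lt_add_one hR0).le
  have hRle : R ≤ (2/σ) ^ ((1:ℝ)/ζ) * (Real.log L) ^ ((1:ℝ)/ζ) := by
    rw [hRdef, ← Real.mul_rpow (by positivity) hlogLpos.le]
    apply Real.rpow_le_rpow (by positivity) ?_ (by positivity)
    rw [Real.log_mul (by norm_num) (by positivity)]
    rw [div_le_iff₀ hσ] at *
    calc Real.log 2 + Real.log L ≤ 2 * Real.log L := by linarith
      _ = 2/σ * Real.log L * σ := by field_simp
  have h3 : (3:ℝ) ≤ 3 / (Real.log 2) ^ ((1:ℝ)/ζ) * (Real.log L) ^ ((1:ℝ)/ζ) := by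
    rw [div_mul_eq_mul_div, le_div_iff₀ (by positivity)]
    have : (Real.log 2) ^ ((1:ℝ)/ζ) ≤ (Real.log L) ^ ((1:ℝ)/ζ) :=
      Real.rpow_le_rpow hlog2.le hlogL (by positivity)
    nlinarith [Real.rpow_nonneg hlog2.le ((1:ℝ)/ζ)]
  have hside : (2 * N + 1 : ℝ) ≤ c1 * (Real.log L) ^ ((1:ℝ)/ζ) := by
    rw [hc1def, add_mul]
    have : (2:ℝ) * (2/σ) ^ ((1:ℝ)/ζ) * (Real.log L) ^ ((1:ℝ)/ζ)
        = 2 * ((2/σ) ^ ((1:ℝ)/ζ) * (Real.log L) ^ ((1:ℝ)/ζ)) := by ring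
    rw [this]
    linarith
  have hfinal : (2 * (B.card : ℝ)) ≤ 2 * c1 ^ d * (Real.log L) ^ ((d:ℝ)/ζ) := by
    rw [hBcard]
    push_cast
    have hpow : ((2 * N + 1 : ℝ)) ^ d ≤ (c1 * (Real.log L) ^ ((1:ℝ)/ζ)) ^ d :=
      pow_le_pow_left₀ (by positivity) hside d
    have hrw : (c1 * (Real.log L) ^ ((1:ℝ)/ζ)) ^ d = c1 ^ d * (Real.log L) ^ ((d:ℝ)/ζ) := by
      rw [mul_pow, ← Real.rpow_natCast ((Real.log L) ^ ((1:ℝ)/ζ)) d,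
        ← Real.rpow_mul hlogLpos.le]
      congr 1
      field_simp
    rw [hrw] at hpow
    nlinarith [Real.rpow_nonneg hlogLpos.le ((d:ℝ)/ζ), pow_nonneg hc1.le d]
  calc (S.ncard : ℝ) ≤ 2 * B.card := hScard
    _ ≤ 2 * c1 ^ d * (Real.log L) ^ ((d:ℝ)/ζ) := hfinal
end

section
/- Let $\sigma>0$, $\zeta\in(0,1]$, and let $(a_{kx})$ be nonnegative reals indexed by $k\in\mathbb{N}$ and $x\in\mathbb{Z}^d$ with $\sum_x a_{kx} = 1$ for all $k$ and $\sum_k a_{kx} \le 1$ for all $x$. Set $A_k := \sum_x e^{\sigma|x|^\zeta} a_{kx}$. If the sequence $(A_k)$ is nondecreasing in $k$, then there exists $\tilde C = \tilde C(\sigma,\zeta,d) > 0$ such that $A_k \ge \exp(\tilde C\, k^{\zeta/d})$ for all $k \ge 1$. -/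
open scoped ENNReal

set_option maxHeartbeats 1000000 in
/-- Ordered form of the counting lemma: if the moments `A_k` are nondecreasing,
then `A_k ≥ exp(C̃ k^{ζ/d})` for `k ≥ 1`. -/
theorem stmt_1 (d : ℕ) (hd : 0 < d) (σ ζ : ℝ) (hσ : 0 < σ) (hζ0 : 0 < ζ) (hζ1 : ζ ≤ 1)
    (a : ℕ → (Fin d → ℤ) → ℝ)
    (ha : ∀ k x, 0 ≤ a k x)
    (hrow : ∀ k, HasSum (fun x => a k x) 1)
    (hcolS : ∀ x, Summable (fun k => a k x))
    (hcol : ∀ x, ∑' k, a k x ≤ 1)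
    (A : ℕ → ℝ≥0∞)
    (hA : ∀ k, A k = ∑' x : Fin d → ℤ, ENNReal.ofReal (Real.exp (σ * ‖x‖ ^ ζ) * a k x))
    (hmono : Monotone A) :
    ∃ C > 0, ∀ k : ℕ, 1 ≤ k →
      ENNReal.ofReal (Real.exp (C * (k : ℝ) ^ (ζ / (d : ℝ)))) ≤ A k := by
  refine ⟨σ / 16, by positivity, ?_⟩
  intro k hk
  have hd' : (0:ℝ) < (d:ℝ) := by exact_mod_cast hd
  have hk1 : (1:ℝ) ≤ (k:ℝ) := by exact_mod_cast hk
  have hk2 : (1:ℝ) ≤ ((k:ℝ)+1)/2 := by linarith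
  set s : ℝ := (((k:ℝ)+1)/2) ^ ((1:ℝ)/(d:ℝ)) with hs_def
  have hs1 : 1 ≤ s := Real.one_le_rpow hk2 (by positivity)
  set L : ℕ := ⌊(s-1)/2⌋₊ with hL_def
  have hL1 : (2*(L:ℝ)+1) ≤ s := by
    have := Nat.floor_le (by linarith : (0:ℝ) ≤ (s-1)/2)
    rw [← hL_def] at this
    linarith
  have hL2 : s/4 ≤ (L:ℝ)+1 := by
    have h1 : (s-1)/2 < (L:ℝ)+1 := by
      have := Nat.lt_floor_add_one ((s-1)/2)
      rw [← hL_def] at this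
      exact_mod_cast this
    rcases le_or_gt s 4 with h|h
    · have : (0:ℝ) ≤ (L:ℝ) := Nat.cast_nonneg L
      linarith
    · linarith
  -- the box bound : (2L+1)^d ≤ (k+1)/2
  have hsd : s ^ d = ((k:ℝ)+1)/2 := by
    rw [hs_def, ← Real.rpow_natCast ((((k:ℝ)+1)/2) ^ ((1:ℝ)/(d:ℝ))) d,
      ← Real.rpow_mul (by positivity)]
    rw [one_div, inv_mul_cancel₀ (ne_of_gt hd'), Real.rpow_one]
  have hbox : ((2*L+1 : ℕ):ℝ)^d ≤ ((k:ℝ)+1)/2 := by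
    have h1 : ((2*L+1:ℕ):ℝ)^d ≤ s^d := by
      apply pow_le_pow_left₀ (by positivity)
      push_cast
      linarith
    linarith [h1, hsd.le]
  -- the box
  set B : Finset (Fin d → ℤ) := Finset.Icc (fun _ => -(L:ℤ)) (fun _ => (L:ℤ)) with hB_def
  have hcard : B.card = (2*L+1)^d := by
    rw [hB_def, Pi.card_Icc]
    have : ∀ i : Fin d, (Finset.Icc (-(L:ℤ)) (L:ℤ)).card = 2*L+1 := by
      intro i
      rw [Int.card_Icc]
      omega
    rw [Finset.prod_congr rfl (fun i _ => this i), Finset.prod_const, Finset.card_univ,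
      Fintype.card_fin]
  -- norm lower bound outside the box
  have hnorm_out : ∀ x : Fin d → ℤ, x ∉ B → ((L:ℝ)+1) ≤ ‖x‖ := by
    intro x hx
    have hex : ∃ i, (L:ℤ) + 1 ≤ |x i| := by
      by_contra h
      push_neg at h
      apply hx
      rw [hB_def, Finset.mem_Icc]
      constructor <;> intro i <;>
        · have h1 := h i
          have h2 : |x i| ≤ (L:ℤ) := by omega
          have h3 := abs_le.mp h2
          simp only []
          omega
    obtain ⟨i, hi⟩ := hex
    have h1 : ((L:ℝ)+1) ≤ |((x i : ℤ) : ℝ)| := by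
      rw [← Int.cast_abs]
      exact_mod_cast hi
    calc ((L:ℝ)+1) ≤ |((x i : ℤ) : ℝ)| := h1
      _ = ‖x i‖ := (Int.norm_eq_abs _).symm
      _ ≤ ‖x‖ := norm_le_pi_norm x i
  -- exponential factor bounds
  set t : ℝ := σ * ((L:ℝ)+1) ^ ζ with ht_def
  have ht0 : 0 ≤ t := by
    have : (0:ℝ) ≤ ((L:ℝ)+1) ^ ζ := Real.rpow_nonneg (by positivity) ζ
    positivity
  have hfac1 : ∀ x : Fin d → ℤ, 1 ≤ Real.exp (σ * ‖x‖ ^ ζ) := by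
    intro x
    apply Real.one_le_exp
    have : (0:ℝ) ≤ ‖x‖ ^ ζ := Real.rpow_nonneg (norm_nonneg x) ζ
    positivity
  have hfac2 : ∀ x : Fin d → ℤ, x ∉ B → Real.exp t ≤ Real.exp (σ * ‖x‖ ^ ζ) := by
    intro x hx
    apply Real.exp_le_exp.mpr
    rw [ht_def]
    apply mul_le_mul_of_nonneg_left _ hσ.le
    exact Real.rpow_le_rpow (by positivity) (hnorm_out x hx) hζ0.le
  -- row masses
  set p : ℕ → ℝ := fun j => ∑ x ∈ B, a j x with hp_def
  set q : ℕ → ℝ := fun j => ∑' x : ↑(↑B : Set (Fin d → ℤ))ᶜ, a j ↑x with hq_def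
  have hp0 : ∀ j, 0 ≤ p j := fun j => Finset.sum_nonneg fun x _ => ha j x
  have hq0 : ∀ j, 0 ≤ q j := fun j => tsum_nonneg fun x => ha j _
  have hpq : ∀ j, p j + q j = 1 := by
    intro j
    have h := Summable.sum_add_tsum_compl (s := B) (f := fun x => a j x) (hrow j).summable
    rw [(hrow j).tsum_eq] at h
    exact h
  -- per-row lower bound
  have hrowbound : ∀ j, ENNReal.ofReal (p j) +
      ENNReal.ofReal (Real.exp t) * ENNReal.ofReal (q j) ≤ A j := by
    intro j
    rw [hA j]
    rw [← Summable.tsum_add_tsum_compl (s := (↑B : Set (Fin d → ℤ)))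
      (f := fun x => ENNReal.ofReal (Real.exp (σ * ‖x‖ ^ ζ) * a j x))
      ENNReal.summable ENNReal.summable]
    apply add_le_add
    · rw [Finset.tsum_subtype' B (fun x => ENNReal.ofReal (Real.exp (σ * ‖x‖ ^ ζ) * a j x)),
        hp_def, ENNReal.ofReal_sum_of_nonneg (fun x _ => ha j x)]
      apply Finset.sum_le_sum
      intro x _
      apply ENNReal.ofReal_le_ofReal
      exact le_mul_of_one_le_left (ha j x) (hfac1 x)
    · have hsub : Summable (fun x : ↑(↑B : Set (Fin d → ℤ))ᶜ => a j ↑x) :=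
        (hrow j).summable.subtype _
      rw [hq_def, ENNReal.ofReal_tsum_of_nonneg (fun x => ha j _) hsub,
        ← ENNReal.tsum_mul_left]
      apply ENNReal.tsum_le_tsum
      intro x
      rw [← ENNReal.ofReal_mul (Real.exp_nonneg t)]
      apply ENNReal.ofReal_le_ofReal
      have hxB : (x : Fin d → ℤ) ∉ B := x.2
      exact mul_le_mul_of_nonneg_right (hfac2 _ hxB) (ha j _)
  -- column bound
  set P : ℝ := ∑ j ∈ Finset.range (k+1), p j with hP_def
  set Q : ℝ := ∑ j ∈ Finset.range (k+1), q j with hQ_def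
  have hPcard : P ≤ (B.card : ℝ) := by
    rw [hP_def, hp_def]
    rw [Finset.sum_comm]
    calc ∑ x ∈ B, ∑ j ∈ Finset.range (k+1), a j x ≤ ∑ x ∈ B, 1 := by
          apply Finset.sum_le_sum
          intro x _
          exact le_trans (Summable.sum_le_tsum (Finset.range (k+1)) (fun j _ => ha j x) (hcolS x))
            (hcol x)
      _ = (B.card : ℝ) := by simp
  have hPhalf : P ≤ ((k:ℝ)+1)/2 := by
    refine le_trans hPcard ?_
    rw [hcard]
    push_cast
    push_cast at hbox
    linarith
  have hPQ : P + Q = (k:ℝ)+1 := by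
    rw [hP_def, hQ_def, ← Finset.sum_add_distrib]
    rw [Finset.sum_congr rfl (fun j _ => hpq j)]
    simp
  have hP0 : 0 ≤ P := Finset.sum_nonneg fun j _ => hp0 j
  have hQ0 : 0 ≤ Q := Finset.sum_nonneg fun j _ => hq0 j
  -- real convexity inequality
  have hreal : ((k:ℝ)+1) * Real.exp (t/2) ≤ P + Real.exp t * Q := by
    set u : ℝ := Real.exp (t/2) with hu_def
    have hu1 : 1 ≤ u := Real.one_le_exp (by linarith)
    have hut : Real.exp t = u * u := by
      rw [hu_def, ← Real.exp_add]
      ring_nf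
    have hPQle : P ≤ Q := by linarith
    have hPQu : P ≤ Q * u := le_trans hPQle (le_mul_of_one_le_right hQ0 hu1)
    have key : 0 ≤ (u - 1) * (Q * u - P) :=
      mul_nonneg (by linarith) (by linarith)
    rw [hut, ← hPQ]
    nlinarith [key]
  -- assemble in ℝ≥0∞
  have hcancel : ENNReal.ofReal (Real.exp (t/2)) ≤ A k := by
    have hmain : ((k:ℝ≥0∞)+1) * ENNReal.ofReal (Real.exp (t/2)) ≤ ((k:ℝ≥0∞)+1) * A k := by
      calc ((k:ℝ≥0∞)+1) * ENNReal.ofReal (Real.exp (t/2))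
          = ENNReal.ofReal (((k:ℝ)+1) * Real.exp (t/2)) := by
            rw [ENNReal.ofReal_mul (by positivity)]
            congr 1
            rw [ENNReal.ofReal_add (by positivity) zero_le_one]
            simp [ENNReal.ofReal_natCast]
        _ ≤ ENNReal.ofReal (P + Real.exp t * Q) := ENNReal.ofReal_le_ofReal hreal
        _ = ENNReal.ofReal P + ENNReal.ofReal (Real.exp t) * ENNReal.ofReal Q := by
            rw [ENNReal.ofReal_add hP0 (by positivity), ENNReal.ofReal_mul (Real.exp_nonneg t)]
        _ = ∑ j ∈ Finset.range (k+1),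
              (ENNReal.ofReal (p j) + ENNReal.ofReal (Real.exp t) * ENNReal.ofReal (q j)) := by
            rw [Finset.sum_add_distrib, hP_def, hQ_def,
              ENNReal.ofReal_sum_of_nonneg (fun j _ => hp0 j),
              ENNReal.ofReal_sum_of_nonneg (fun j _ => hq0 j), ← Finset.mul_sum]
        _ ≤ ∑ j ∈ Finset.range (k+1), A j := Finset.sum_le_sum fun j _ => hrowbound j
        _ ≤ ∑ j ∈ Finset.range (k+1), A k := by
            apply Finset.sum_le_sum
            intro j hj
            exact hmono (Nat.lt_succ_iff.mp (Finset.mem_range.mp hj))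
        _ = ((k:ℝ≥0∞)+1) * A k := by
            rw [Finset.sum_const, Finset.card_range, nsmul_eq_mul]
            push_cast
            ring
    have hne0 : ((k:ℝ≥0∞)+1) ≠ 0 := by simp
    have hnetop : ((k:ℝ≥0∞)+1) ≠ ⊤ := by
      simp [ENNReal.add_ne_top]
    exact (ENNReal.mul_le_mul_iff_right hne0 hnetop).mp hmain
  -- exponent comparison
  have hexp : σ/16 * (k:ℝ) ^ (ζ/(d:ℝ)) ≤ t/2 := by
    have hζd : ζ/(d:ℝ) ≤ 1 := by
      rw [div_le_one hd']
      have : (1:ℝ) ≤ (d:ℝ) := by exact_mod_cast hd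
      linarith
    have hsζ : s ^ ζ = (((k:ℝ)+1)/2) ^ (ζ/(d:ℝ)) := by
      rw [hs_def, ← Real.rpow_mul (by positivity)]
      congr 1
      ring
    have h1 : (k:ℝ) ^ (ζ/(d:ℝ)) ≤ ((k:ℝ)+1) ^ (ζ/(d:ℝ)) :=
      Real.rpow_le_rpow (by linarith) (by linarith) (by positivity)
    have h2 : ((k:ℝ)+1) ^ (ζ/(d:ℝ)) = (((k:ℝ)+1)/2) ^ (ζ/(d:ℝ)) * (2:ℝ) ^ (ζ/(d:ℝ)) := by
      rw [← Real.mul_rpow (by linarith) (by norm_num)]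
      norm_num
    have h3 : (2:ℝ) ^ (ζ/(d:ℝ)) ≤ 2 := by
      calc (2:ℝ) ^ (ζ/(d:ℝ)) ≤ (2:ℝ) ^ (1:ℝ) :=
            Real.rpow_le_rpow_of_exponent_le one_le_two hζd
        _ = 2 := Real.rpow_one 2
    have hsnn : (0:ℝ) ≤ (((k:ℝ)+1)/2) ^ (ζ/(d:ℝ)) := Real.rpow_nonneg (by linarith) _
    have h4 : (k:ℝ) ^ (ζ/(d:ℝ)) ≤ 2 * s ^ ζ := by
      rw [hsζ]
      calc (k:ℝ) ^ (ζ/(d:ℝ)) ≤ (((k:ℝ)+1)/2) ^ (ζ/(d:ℝ)) * (2:ℝ) ^ (ζ/(d:ℝ)) := by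
            rw [← h2]; exact h1
        _ ≤ (((k:ℝ)+1)/2) ^ (ζ/(d:ℝ)) * 2 := by
            exact mul_le_mul_of_nonneg_left h3 hsnn
        _ = 2 * (((k:ℝ)+1)/2) ^ (ζ/(d:ℝ)) := by ring
    -- (L+1)^ζ ≥ (s/4)^ζ ≥ s^ζ / 4
    have h5 : (s/4) ^ ζ ≤ ((L:ℝ)+1) ^ ζ :=
      Real.rpow_le_rpow (by positivity) hL2 hζ0.le
    have hfour : (4:ℝ) ^ ζ ≤ 4 := by
      calc (4:ℝ) ^ ζ ≤ (4:ℝ) ^ (1:ℝ) :=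
            Real.rpow_le_rpow_of_exponent_le (by norm_num) hζ1
        _ = 4 := Real.rpow_one 4
    have h6 : s ^ ζ / 4 ≤ (s/4) ^ ζ := by
      rw [Real.div_rpow (by linarith) (by norm_num)]
      exact div_le_div_of_nonneg_left (Real.rpow_nonneg (by linarith) ζ)
        (by positivity) hfour
    have h7 : s ^ ζ / 4 ≤ ((L:ℝ)+1) ^ ζ := le_trans h6 h5
    rw [ht_def]
    nlinarith [h4, h7, hσ.le, Real.rpow_nonneg (by linarith : (0:ℝ) ≤ s) ζ]
  refine le_trans ?_ hcancel
  apply ENNReal.ofReal_le_ofReal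
  exact Real.exp_le_exp.mpr hexp
end

section
/- Let $\mathcal{H}$ be a Hilbert space, $\phi\in\mathcal{H}$ a unit vector, and for each $x\in\mathbb{Z}^d$ let $\chi_x$ be an orthogonal projection on $\mathcal{H}$ with $\sum_{x\in\mathbb{Z}^d}\|\chi_x\psi\|^2 = \|\psi\|^2$ for all $\psi$. Let $T^{-1}$ be a bounded operator commuting with each $\chi_x$ such that $\|\chi_x T^{-1}\| \le \langle x\rangle^{-\kappa}$ with $2\kappa > d$, and set $\alpha_\phi := \|T^{-1}\phi\|^2$. Suppose there exist $\zeta\in(0,1]$, $\sigma>0$, a function $f:\mathbb{R}^+\to\mathbb{R}^+$, and for each $\epsilon>0$ a constant $C_\epsilon$ such that $\|\chi_x\phi\|\,\|\chi_u\phi\| \le C_\epsilon f(\alpha_\phi)\, e^{\epsilon|u|^\zeta} e^{-\sigma|x-u|^\zeta}$ for all $x,u\in\mathbb{Z}^d$. Let $x_\phi\in\mathbb{Z}^d$ maximize $x\mapsto\|\chi_x\phi\|$. Then there exist new constants $C'_\epsilon$ (depending on $d,\kappa,\zeta,\sigma,\epsilon$) such that $\|\chi_x\phi\| \le C'_\epsilon\,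 \alpha_\phi^{-1/2} f(\alpha_\phi)\, e^{\epsilon|x_\phi|^\zeta} e^{-\sigma|x-x_\phi|^\zeta}$ for all $x\in\mathbb{Z}^d$. -/
/-!
Since `χ x` is a projection commuting with `T⁻¹`,
`‖χ x T⁻¹ φ‖ ≤ ‖χ x T⁻¹‖ ‖χ x φ‖ ≤ ⟨x⟩^{-κ} ‖χ_{x_φ} φ‖`. Summing squares over the resolution
of the identity gives `α_φ ≤ C_d ‖χ_{x_φ} φ‖²` with `C_d = ∑ ⟨x⟩^{-2κ}`, finite as `2κ > d`.
So `√α_φ ‖χ_x φ‖ ≤ √C_d ‖χ_x φ‖ ‖χ_{x_φ} φ‖`, and the SUDEC bound at `u = x_φ` gives the claim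
with `C'_ε = C_ε √C_d`.
-/

open Filter Finset

lemma summable_one_add_sq_rpow_neg {p : ℝ} (hp : 1 < 2 * p) :
    Summable fun n : ℤ => (1 + (n : ℝ) ^ 2) ^ (-p) := by
  refine (Real.summable_abs_int_rpow hp).of_norm_bounded_eventually ?_
  filter_upwards [eventually_cofinite_ne 0] with n hn
  have hn' : 0 < |(n : ℝ)| := abs_pos.2 (Int.cast_ne_zero.2 hn)
  rw [Real.norm_of_nonneg (by positivity), ← sq_abs]
  calc (1 + |(n : ℝ)| ^ 2) ^ (-p) ≤ (|(n : ℝ)| ^ 2) ^ (-p) :=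
        Real.rpow_le_rpow_of_nonpos (by positivity) (by linarith) (by linarith)
    _ = |(n : ℝ)| ^ (-(2 * p)) := by
        rw [← Real.rpow_natCast, ← Real.rpow_mul hn'.le]
        ring_nf

lemma summable_pi_prod {ι α : Type*} [Fintype ι] {g : α → ℝ} (hg0 : ∀ a, 0 ≤ g a)
    (hg : Summable g) : Summable fun x : ι → α => ∏ i, g (x i) := by
  classical
  refine summable_of_sum_le (c := ∏ _i : ι, ∑' a, g a)
    (fun x => prod_nonneg fun i _ => hg0 _) fun s => ?_
  calc ∑ x ∈ s, ∏ i, g (x i)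
      ≤ ∑ x ∈ Fintype.piFinset fun i => s.image (· i), ∏ i, g (x i) :=
        sum_le_sum_of_subset_of_nonneg
          (fun x hx => Fintype.mem_piFinset.2 fun i => mem_image_of_mem _ hx)
          (fun _ _ _ => prod_nonneg fun i _ => hg0 _)
    _ = ∏ i, ∑ a ∈ s.image (· i), g a := (prod_univ_sum _ _).symm
    _ ≤ ∏ _i : ι, ∑' a, g a :=
        prod_le_prod (fun i _ => sum_nonneg fun a _ => hg0 a)
          fun i _ => hg.sum_le_tsum _ fun a _ => hg0 a

lemma prod_one_add_sq_le_one_add_norm_sq_pow {d : ℕ} (x : Fin d → ℤ) :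
    ∏ i, (1 + (x i : ℝ) ^ 2) ≤ (1 + ‖x‖ ^ 2) ^ d := by
  calc ∏ i, (1 + (x i : ℝ) ^ 2) ≤ ∏ _i : Fin d, (1 + ‖x‖ ^ 2) := by
        refine prod_le_prod (fun i _ => by positivity) fun i _ => ?_
        have hi : |(x i : ℝ)| ≤ ‖x‖ := by simpa [Int.norm_eq_abs] using norm_le_pi_norm x i
        rw [← sq_abs]
        gcongr
    _ = (1 + ‖x‖ ^ 2) ^ d := by simp

-- Comparison with `∏ᵢ (1 + xᵢ²)^{-κ/d}`, whose factors are summable over `ℤ` as `2κ/d > 1`.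
lemma summable_one_add_norm_sq_rpow_neg {d : ℕ} {κ : ℝ} (hκ : (d : ℝ) < 2 * κ) :
    Summable fun x : Fin d → ℤ => (1 + ‖x‖ ^ 2) ^ (-κ) := by
  rcases Nat.eq_zero_or_pos d with rfl | hd
  · exact .of_finite
  have hd' : (0 : ℝ) < d := by exact_mod_cast hd
  have hκ0 : 0 < κ := by linarith
  have hp : 1 < 2 * (κ / d) := by rw [mul_div_assoc', lt_div_iff₀ hd']; linarith
  refine (summable_pi_prod (fun n => by positivity)
    (summable_one_add_sq_rpow_neg hp)).of_nonneg_of_le (fun x => by positivity) fun x => ?_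
  calc (1 + ‖x‖ ^ 2) ^ (-κ) = ((1 + ‖x‖ ^ 2) ^ d) ^ (-(κ / d)) := by
        rw [← Real.rpow_natCast (1 + ‖x‖ ^ 2) d, ← Real.rpow_mul (by positivity)]
        field_simp
    _ ≤ (∏ i, (1 + (x i : ℝ) ^ 2)) ^ (-(κ / d)) :=
        Real.rpow_le_rpow_of_nonpos (prod_pos fun i _ => by positivity)
          (prod_one_add_sq_le_one_add_norm_sq_pow x) (by rw [neg_nonpos]; positivity)
    _ = ∏ i, (1 + (x i : ℝ) ^ 2) ^ (-(κ / d)) :=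
        (Real.finsetProd_rpow _ _ (fun i _ => by positivity) _).symm

section ResolutionOfIdentity

variable {𝕜 E ι : Type*} [NontriviallyNormedField 𝕜] [NormedAddCommGroup E] [NormedSpace 𝕜 E]

lemma ContinuousLinearMap.norm_apply_apply_le_of_idempotent_of_commute {P T : E →L[𝕜] E}
    (hP : P.comp P = P) (hPT : P.comp T = T.comp P) (v : E) :
    ‖P (T v)‖ ≤ ‖P.comp T‖ * ‖P v‖ := by
  have hPP := DFunLike.congr_fun hP (T v)
  have hcomm := DFunLike.congr_fun hPT v
  simp only [ContinuousLinearMap.comp_apply] at hPP hcomm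
  rw [← hPP, hcomm]
  exact (P.comp T).le_opNorm (P v)

lemma norm_apply_le_sqrt_tsum_mul {χ : ι → E →L[𝕜] E} {T : E →L[𝕜] E} {φ : E}
    (hidem : ∀ x, (χ x).comp (χ x) = χ x) (hcomm : ∀ x, (χ x).comp T = T.comp (χ x))
    (hres : HasSum (fun x => ‖χ x (T φ)‖ ^ 2) (‖T φ‖ ^ 2))
    {w : ι → ℝ} (hw : Summable w) (hT : ∀ x, ‖(χ x).comp T‖ ^ 2 ≤ w x)
    {M : ℝ} (hM0 : 0 ≤ M) (hM : ∀ x, ‖χ x φ‖ ≤ M) :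
    ‖T φ‖ ≤ √(∑' x, w x) * M := by
  have hterm : ∀ x, ‖χ x (T φ)‖ ^ 2 ≤ w x * M ^ 2 := fun x =>
    calc ‖χ x (T φ)‖ ^ 2 ≤ (‖(χ x).comp T‖ * ‖χ x φ‖) ^ 2 := by
          gcongr
          exact (χ x).norm_apply_apply_le_of_idempotent_of_commute (hidem x) (hcomm x) φ
      _ = ‖(χ x).comp T‖ ^ 2 * ‖χ x φ‖ ^ 2 := mul_pow _ _ _
      _ ≤ w x * M ^ 2 :=
          mul_le_mul (hT x) (pow_le_pow_left₀ (norm_nonneg _) (hM x) 2) (by positivity)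
            ((sq_nonneg _).trans (hT x))
  rw [← Real.sqrt_sq hM0, ← Real.sqrt_mul' _ (sq_nonneg M), ← tsum_mul_right]
  exact Real.le_sqrt_of_sq_le (hres.tsum_eq ▸ hres.summable.tsum_le_tsum hterm (hw.mul_right _))

end ResolutionOfIdentity

theorem stmt_2_general {d : ℕ} {H : Type*} [NormedAddCommGroup H]
    [InnerProductSpace ℂ H] [CompleteSpace H]
    (χ : (Fin d → ℤ) → H →L[ℂ] H)
    (hproj : ∀ x, IsSelfAdjoint (χ x) ∧ (χ x).comp (χ x) = χ x)
    (hres : ∀ ψ : H, HasSum (fun x => ‖χ x ψ‖ ^ 2) (‖ψ‖ ^ 2))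
    (κ : ℝ) (hκ : (d : ℝ) < 2 * κ)
    (Tinv : H →L[ℂ] H)
    (hcomm : ∀ x, (χ x).comp Tinv = Tinv.comp (χ x))
    (hT : ∀ x, ‖(χ x).comp Tinv‖ ≤ (1 + ‖x‖ ^ 2) ^ (-(κ / 2)))
    (φ : H) (hα : 0 < ‖Tinv φ‖)
    (ζ σ : ℝ)
    (f : ℝ → ℝ)
    (hsudec : ∀ ε > 0, ∃ C > 0, ∀ x u : Fin d → ℤ,
      ‖χ x φ‖ * ‖χ u φ‖ ≤
        C * f (‖Tinv φ‖ ^ 2) * Real.exp (ε * ‖u‖ ^ ζ) * Real.exp (-σ * ‖x - u‖ ^ ζ))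
    (xφ : Fin d → ℤ) (hmax : ∀ x, ‖χ x φ‖ ≤ ‖χ xφ φ‖) :
    ∀ ε > 0, ∃ C' > 0, ∀ x : Fin d → ℤ,
      ‖χ x φ‖ ≤ C' * (‖Tinv φ‖)⁻¹ * f (‖Tinv φ‖ ^ 2) *
        Real.exp (ε * ‖xφ‖ ^ ζ) * Real.exp (-σ * ‖x - xφ‖ ^ ζ) := by
  intro ε hε
  obtain ⟨C, hC, hC_bound⟩ := hsudec ε hε
  have hw := summable_one_add_norm_sq_rpow_neg (d := d) hκ
  have hT_sq : ∀ x, ‖(χ x).comp Tinv‖ ^ 2 ≤ (1 + ‖x‖ ^ 2) ^ (-κ) := fun x =>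
    calc ‖(χ x).comp Tinv‖ ^ 2 ≤ ((1 + ‖x‖ ^ 2) ^ (-(κ / 2))) ^ 2 :=
          pow_le_pow_left₀ (norm_nonneg _) (hT x) 2
      _ = (1 + ‖x‖ ^ 2) ^ (-κ) := by rw [← Real.rpow_mul_natCast (by positivity)]; ring_nf
  set S := ∑' x : Fin d → ℤ, (1 + ‖x‖ ^ 2) ^ (-κ)
  have hS : 0 < S := hw.tsum_pos (fun x => by positivity) 0 (by positivity)
  have hα_le : ‖Tinv φ‖ ≤ √S * ‖χ xφ φ‖ :=
    norm_apply_le_sqrt_tsum_mul (fun x => (hproj x).2) hcomm (hres _) hw hT_sq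
      (norm_nonneg _) hmax
  refine ⟨C * √S, by positivity, fun x => ?_⟩
  calc ‖χ x φ‖ = ‖χ x φ‖ * ‖Tinv φ‖ * ‖Tinv φ‖⁻¹ := by field_simp
    _ ≤ ‖χ x φ‖ * (√S * ‖χ xφ φ‖) * ‖Tinv φ‖⁻¹ := by gcongr
    _ = √S * (‖χ x φ‖ * ‖χ xφ φ‖) * ‖Tinv φ‖⁻¹ := by ring
    _ ≤ √S * (C * f (‖Tinv φ‖ ^ 2) * Real.exp (ε * ‖xφ‖ ^ ζ) *
          Real.exp (-σ * ‖x - xφ‖ ^ ζ)) * ‖Tinv φ‖⁻¹ :=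
        mul_le_mul_of_nonneg_right (mul_le_mul_of_nonneg_left (hC_bound x xφ) (by positivity))
          (by positivity)
    _ = _ := by ring

/-- (SUDEC)_f implies (SULE)_{f(s)/√s}: from a semi-uniform decay of eigenfunction
correlations one deduces semi-uniform localization around a maximizing center. -/
theorem stmt_2 {d : ℕ} (hd : 0 < d) {H : Type*} [NormedAddCommGroup H]
    [InnerProductSpace ℂ H] [CompleteSpace H]
    (χ : (Fin d → ℤ) → H →L[ℂ] H)
    (hproj : ∀ x, IsSelfAdjoint (χ x) ∧ (χ x).comp (χ x) = χ x)
    (hres : ∀ ψ : H, HasSum (fun x => ‖χ x ψ‖ ^ 2) (‖ψ‖ ^ 2))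
    (κ : ℝ) (hκ : (d : ℝ) < 2 * κ)
    (Tinv : H →L[ℂ] H)
    (hcomm : ∀ x, (χ x).comp Tinv = Tinv.comp (χ x))
    (hT : ∀ x, ‖(χ x).comp Tinv‖ ≤ (1 + ‖x‖ ^ 2) ^ (-(κ / 2)))
    (φ : H) (hφ : ‖φ‖ = 1) (hα : 0 < ‖Tinv φ‖)
    (ζ σ : ℝ) (hζ0 : 0 < ζ) (hζ1 : ζ ≤ 1) (hσ : 0 < σ)
    (f : ℝ → ℝ) (hf : ∀ s, 0 ≤ f s)
    (hsudec : ∀ ε > 0, ∃ C > 0, ∀ x u : Fin d → ℤ,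
      ‖χ x φ‖ * ‖χ u φ‖ ≤
        C * f (‖Tinv φ‖ ^ 2) * Real.exp (ε * ‖u‖ ^ ζ) * Real.exp (-σ * ‖x - u‖ ^ ζ))
    (xφ : Fin d → ℤ) (hmax : ∀ x, ‖χ x φ‖ ≤ ‖χ xφ φ‖) :
    ∀ ε > 0, ∃ C' > 0, ∀ x : Fin d → ℤ,
      ‖χ x φ‖ ≤ C' * (‖Tinv φ‖)⁻¹ * f (‖Tinv φ‖ ^ 2) *
        Real.exp (ε * ‖xφ‖ ^ ζ) * Real.exp (-σ * ‖x - xφ‖ ^ ζ) :=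
  stmt_2_general χ hproj hres κ hκ Tinv hcomm hT φ hα ζ σ f hsudec xφ hmax
end

section
/- Let $\zeta\in(0,1]$, $\sigma>0$, $\delta>0$. Suppose unit vectors $\phi,\psi$ in a Hilbert space with spatial projections $(\chi_x)_{x\in\mathbb{Z}^d}$ (resolving the identity) have centers $x_\phi, x_\psi$ and that for the vector $\varphi = \tfrac1{\sqrt2}(\phi+\psi)$ there holds a SUDEC bound: for every $\epsilon>0$ there is $C_\epsilon$ with $\|\chi_A\varphi\|\,\|\chi_B\varphi\| \le C_\epsilon e^{\epsilon|x_\phi|^\zeta} e^{-\sigma \operatorname{dist}(A,B)^\zeta}$ for boxes $A,B\subset\mathbb{Z}^d$. If additionally $\|\chi_{\{|x-x_\phi|\le R_\phi\}}\varphi\| \ge \tfrac1{3\sqrt2}$ and $\|\chi_{\{|x-x_\psi|\le R_\psi\}}\varphi\| \ge \tfrac1{3\sqrt2}$ with $|x_\phi-x_\psi| \ge 2(R_\phi+R_\psi)$, then $\tfrac1{18} \le C_\epsilon\, e^{\epsilon' |x_\phi|^\zeta}\, e^{-\sigma(|x_\phi-x_\psi|/2)^\zeta}$ for suitable $\epsilon'$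 proportional to $\epsilon$; consequently $|x_\phi - x_\psi| \le \delta|x_\phi| + C'_\delta$ for a constant $C'_\delta$ depending on $\zeta,\sigma,\delta$ (choosing $\epsilon$ small). -/
universe u

/-- Localization centers of the superposition `φ+ψ` must be close: from the SUDEC
bound on `varphi = (φ+ψ)/√2` together with definite masses near the two centers
and their separation, one gets `1/18 ≤ C_ε e^{ε|x_φ|^ζ} e^{-σ(|x_φ-x_ψ|/2)^ζ}`,
and consequently `|x_φ - x_ψ| ≤ δ|x_φ| + C'` with `C'` uniform. -/
theorem stmt_19 (d : ℕ) (ζ σ δ : ℝ) (hζ0 : 0 < ζ) (hζ1 : ζ ≤ 1) (hσ : 0 < σ)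
    (hδ : 0 < δ) (Cb : ℝ → ℝ) (hCb : ∀ ε > 0, 0 < Cb ε) :
    ∃ C' : ℝ, ∀ (H : Type u) (_ : NormedAddCommGroup H) (_ : InnerProductSpace ℂ H)
      (_ : CompleteSpace H) (χ : (Fin d → ℤ) → H →L[ℂ] H),
      (∀ x, IsSelfAdjoint (χ x) ∧ (χ x).comp (χ x) = χ x) →
      (∀ ψ : H, HasSum (fun x => ‖χ x ψ‖ ^ 2) (‖ψ‖ ^ 2)) →
      ∀ (φ ψ : H), ‖φ‖ = 1 → ‖ψ‖ = 1 →
      ∀ (xφ xψ : Fin d → ℤ) (Rφ Rψ : ℝ), 0 ≤ Rφ → 0 ≤ Rψ →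
      (∀ ε > 0, ∀ A B : Set (Fin d → ℤ),
        Real.sqrt (∑' x : A, ‖χ (x : Fin d → ℤ) (((Real.sqrt 2 : ℂ))⁻¹ • (φ + ψ))‖ ^ 2) *
          Real.sqrt (∑' x : B, ‖χ (x : Fin d → ℤ) (((Real.sqrt 2 : ℂ))⁻¹ • (φ + ψ))‖ ^ 2) ≤
        Cb ε * Real.exp (ε * ‖xφ‖ ^ ζ) *
          Real.exp (-σ *
            (sInf ((fun p : (Fin d → ℤ) × (Fin d → ℤ) => ‖p.1 - p.2‖) '' (A ×ˢ B))) ^ ζ)) →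
      1 / (3 * Real.sqrt 2) ≤
        Real.sqrt (∑' x : {x : Fin d → ℤ | ‖x - xφ‖ ≤ Rφ},
          ‖χ (x : Fin d → ℤ) (((Real.sqrt 2 : ℂ))⁻¹ • (φ + ψ))‖ ^ 2) →
      1 / (3 * Real.sqrt 2) ≤
        Real.sqrt (∑' x : {x : Fin d → ℤ | ‖x - xψ‖ ≤ Rψ},
          ‖χ (x : Fin d → ℤ) (((Real.sqrt 2 : ℂ))⁻¹ • (φ + ψ))‖ ^ 2) →
      2 * (Rφ + Rψ) ≤ ‖xφ - xψ‖ →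
      (∀ ε > 0, 1 / 18 ≤ Cb ε * Real.exp (ε * ‖xφ‖ ^ ζ) *
          Real.exp (-σ * (‖xφ - xψ‖ / 2) ^ ζ)) ∧
      ‖xφ - xψ‖ ≤ δ * ‖xφ‖ + C' := by
  have h2p : (0:ℝ) < 2 ^ (ζ + 1) := Real.rpow_pos_of_pos two_pos _
  have hδζ : (0:ℝ) < δ ^ ζ := Real.rpow_pos_of_pos hδ _
  set ε₀ : ℝ := σ * δ ^ ζ / 2 ^ (ζ + 1) with hε₀def
  have hε₀pos : 0 < ε₀ := by positivity
  have hCb₀ : 0 < Cb ε₀ := hCb ε₀ hε₀pos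
  refine ⟨(2 ^ (ζ + 1) * max (Real.log (18 * Cb ε₀)) 0 / σ) ^ (1 / ζ), ?_⟩
  intro H _ _ _ χ _ _ φ ψ hφ hψ xφ xψ Rφ Rψ hRφ hRψ hSUDEC hA hB hsep
  set D := ‖xφ - xψ‖ with hDdef
  have hD0 : 0 ≤ D := norm_nonneg _
  -- Part 1
  have part1 : ∀ ε > 0, 1 / 18 ≤ Cb ε * Real.exp (ε * ‖xφ‖ ^ ζ) *
      Real.exp (-σ * (D / 2) ^ ζ) := by
    intro ε hε
    have key := hSUDEC ε hε {x | ‖x - xφ‖ ≤ Rφ} {x | ‖x - xψ‖ ≤ Rψ}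
    set S : Set ℝ := (fun p : (Fin d → ℤ) × (Fin d → ℤ) => ‖p.1 - p.2‖) ''
      (({x | ‖x - xφ‖ ≤ Rφ} : Set (Fin d → ℤ)) ×ˢ {x | ‖x - xψ‖ ≤ Rψ}) with hSdef
    have hSne : S.Nonempty := by
      refine ⟨‖xφ - xψ‖, ⟨(xφ, xψ), ⟨?_, ?_⟩, rfl⟩⟩
      · simp [hRφ]
      · simp [hRψ]
    have hsinf : D / 2 ≤ sInf S := by
      apply le_csInf hSne
      rintro b ⟨⟨a, c⟩, ⟨ha, hc⟩, rfl⟩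
      simp only [Set.mem_setOf_eq] at ha hc
      have htri : D ≤ ‖xφ - a‖ + ‖a - c‖ + ‖c - xψ‖ := by
        calc D = ‖(xφ - a) + (a - c) + (c - xψ)‖ := by
              rw [hDdef]; congr 1; abel
          _ ≤ ‖(xφ - a) + (a - c)‖ + ‖c - xψ‖ := norm_add_le _ _
          _ ≤ ‖xφ - a‖ + ‖a - c‖ + ‖c - xψ‖ := by
              have := norm_add_le (xφ - a) (a - c); linarith
      have ha' : ‖xφ - a‖ ≤ Rφ := by rw [norm_sub_rev]; exact ha
      simp only
      linarith
    have hexp : Real.exp (-σ * (sInf S) ^ ζ) ≤ Real.exp (-σ * (D / 2) ^ ζ) := by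
      apply Real.exp_le_exp.2
      have hmono : (D / 2) ^ ζ ≤ (sInf S) ^ ζ :=
        Real.rpow_le_rpow (by positivity) hsinf hζ0.le
      nlinarith
    have hlow : 1 / 18 ≤
        Real.sqrt (∑' x : {x : Fin d → ℤ | ‖x - xφ‖ ≤ Rφ},
          ‖χ (x : Fin d → ℤ) (((Real.sqrt 2 : ℂ))⁻¹ • (φ + ψ))‖ ^ 2) *
        Real.sqrt (∑' x : {x : Fin d → ℤ | ‖x - xψ‖ ≤ Rψ},
          ‖χ (x : Fin d → ℤ) (((Real.sqrt 2 : ℂ))⁻¹ • (φ + ψ))‖ ^ 2) := by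
      have h18 : (1 / (3 * Real.sqrt 2)) * (1 / (3 * Real.sqrt 2)) = 1 / 18 := by
        have h2 : Real.sqrt 2 * Real.sqrt 2 = 2 := Real.mul_self_sqrt (by norm_num)
        rw [div_mul_div_comm, one_mul]
        congr 1
        nlinarith
      calc (1:ℝ) / 18 = (1 / (3 * Real.sqrt 2)) * (1 / (3 * Real.sqrt 2)) := h18.symm
        _ ≤ _ := mul_le_mul hA hB (by positivity) (Real.sqrt_nonneg _)
    have hCbE : 0 ≤ Cb ε * Real.exp (ε * ‖xφ‖ ^ ζ) :=
      mul_nonneg (hCb ε hε).le (Real.exp_pos _).le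
    calc (1:ℝ) / 18 ≤ _ := hlow
      _ ≤ Cb ε * Real.exp (ε * ‖xφ‖ ^ ζ) * Real.exp (-σ * (sInf S) ^ ζ) := key
      _ ≤ Cb ε * Real.exp (ε * ‖xφ‖ ^ ζ) * Real.exp (-σ * (D / 2) ^ ζ) :=
          mul_le_mul_of_nonneg_left hexp hCbE
  refine ⟨part1, ?_⟩
  -- Part 2
  set X := ‖xφ‖ ^ ζ with hXdef
  have h18pos : (0:ℝ) < 18 * Cb ε₀ := by positivity
  have hE : Real.exp (σ * (D / 2) ^ ζ) ≤ 18 * (Cb ε₀ * Real.exp (ε₀ * X)) := by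
    have h' := mul_le_mul_of_nonneg_right (part1 ε₀ hε₀pos)
      (Real.exp_pos (σ * (D / 2) ^ ζ)).le
    rw [mul_assoc, ← Real.exp_add] at h'
    have hz : -σ * (D / 2) ^ ζ + σ * (D / 2) ^ ζ = 0 := by ring
    rw [hz, Real.exp_zero, mul_one] at h'
    linarith
  have hY : σ * (D / 2) ^ ζ ≤ Real.log (18 * Cb ε₀) + ε₀ * X := by
    have h1 : Real.exp (σ * (D / 2) ^ ζ) ≤ Real.exp (Real.log (18 * Cb ε₀) + ε₀ * X) := by
      rw [Real.exp_add, Real.exp_log h18pos]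
      nlinarith [hE]
    exact Real.exp_le_exp.1 h1
  have hC'0 : (0:ℝ) ≤ (2 ^ (ζ + 1) * max (Real.log (18 * Cb ε₀)) 0 / σ) ^ (1 / ζ) :=
    Real.rpow_nonneg (by positivity) _
  by_cases hcase : D ≤ δ * ‖xφ‖
  · linarith
  · push_neg at hcase
    have hXD : X ≤ (D / δ) ^ ζ := by
      apply Real.rpow_le_rpow (norm_nonneg _) _ hζ0.le
      rw [le_div_iff₀ hδ]
      nlinarith [norm_nonneg xφ]
    have hdiv2 : (D / 2) ^ ζ = D ^ ζ / 2 ^ ζ := Real.div_rpow hD0 (by norm_num) ζ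
    have hdivδ : (D / δ) ^ ζ = D ^ ζ / δ ^ ζ := Real.div_rpow hD0 hδ.le ζ
    have h2seq : (2:ℝ) ^ (ζ + 1) = 2 ^ ζ * 2 := by
      rw [Real.rpow_add two_pos, Real.rpow_one]
    have h2ζ : (0:ℝ) < 2 ^ ζ := Real.rpow_pos_of_pos two_pos _
    have hDζ0 : 0 ≤ D ^ ζ := Real.rpow_nonneg hD0 _
    have hLmax : Real.log (18 * Cb ε₀) ≤ max (Real.log (18 * Cb ε₀)) 0 := le_max_left _ _
    have hDζ : D ^ ζ ≤ 2 ^ (ζ + 1) * max (Real.log (18 * Cb ε₀)) 0 / σ := by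
      rw [hdiv2] at hY
      rw [hdivδ] at hXD
      -- ε₀ * X ≤ ε₀ * (D^ζ / δ^ζ) = σ * D^ζ / 2^(ζ+1)
      have hεX : ε₀ * X ≤ σ * D ^ ζ / 2 ^ (ζ + 1) := by
        have h1 : ε₀ * X ≤ ε₀ * (D ^ ζ / δ ^ ζ) :=
          mul_le_mul_of_nonneg_left hXD hε₀pos.le
        have h2 : ε₀ * (D ^ ζ / δ ^ ζ) = σ * D ^ ζ / 2 ^ (ζ + 1) := by
          rw [hε₀def]; field_simp
        linarith [h2 ▸ h1]
      -- so σ * D^ζ / 2^ζ - σ * D^ζ / 2^(ζ+1) ≤ log, i.e. σ D^ζ / 2^(ζ+1) ≤ log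
      have hkey : σ * D ^ ζ / 2 ^ (ζ + 1) ≤ max (Real.log (18 * Cb ε₀)) 0 := by
        have : σ * (D ^ ζ / 2 ^ ζ) - σ * D ^ ζ / 2 ^ (ζ + 1) = σ * D ^ ζ / 2 ^ (ζ + 1) := by
          rw [h2seq]; field_simp; ring
        linarith
      rw [le_div_iff₀ hσ]
      rw [div_le_iff₀ h2p] at hkey
      calc D ^ ζ * σ = σ * D ^ ζ := mul_comm _ _
        _ ≤ max (Real.log (18 * Cb ε₀)) 0 * 2 ^ (ζ + 1) := hkey
        _ = 2 ^ (ζ + 1) * max (Real.log (18 * Cb ε₀)) 0 := mul_comm _ _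
    have hfinal : D ≤ (2 ^ (ζ + 1) * max (Real.log (18 * Cb ε₀)) 0 / σ) ^ (1 / ζ) := by
      calc D = (D ^ ζ) ^ (1 / ζ) := by
            rw [one_div, Real.rpow_rpow_inv hD0 hζ0.ne']
        _ ≤ _ := Real.rpow_le_rpow hDζ0 hDζ (by positivity)
    linarith [mul_nonneg hδ.le (norm_nonneg xφ)]
end
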